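/- arXiv:2602.24153 — 5 statements merged into one kernel-verified Lean document; each statement's English description precedes it below -/
import Mathlib

section
/- Let a, b, i, j, k, r, s be real numbers, and set c := a+b, m := c·i + a·k + a·c·r, n := c·j + b·k + b·c·r, d := i + j + k + c·r. Assume that s+1, m·s+a+c, n·s+b+c, i·s+1, j·s+1, k·s+1 and d·s+3 are all nonzero. Then (−s/(s+1)) · (c·r)/((m·s+a+c)·(n·s+b+c)) + b/((i·s+1)·(j·s+1)·(n·s+b+c)) + (a·c)/((n·s+b+c)·(m·s+a+c)·(i·s+1)) + c²/((k·s+1)·(n·s+b+c)·(m·s+a+c)) = ( (−s/(s+1))·r/(m·s+a+c) + c/((m·s+a+c)·(k·s+1)) + a/((m·s+a+c)·(i·s+1)) + (−s/(s+1))·r/(n·s+b+c) + c/((n·s+b+c)·(k·s+1)) + b/((n·s+b+c)·(j·s+1)) + 1/((i·s+1)·(j·s+1)) ) / (d·s+3). -/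
/-! With `A = m s + a + c`, `B = n s + b + c`, `I = i s + 1`, `J = j s + 1`, `K = k s + 1` and
`D = d s + 3`, the definitions of `c, m, n, d` amount to the two linear relations
`A + B = c D` and `b D + a J = b I + B`, and these alone force the identity. By the first,
`c / (A B) = (A⁻¹ + B⁻¹) / D`, which pairs off the terms carrying `-s/(s+1) · r` and those
carrying `1/K`; the remaining four terms agree after clearing denominators by the second. -/

section

variable {F : Type*} [Field F]

theorem div_mul_eq_inv_add_inv_div_of_add_eq {A B D c : F} (hA : A ≠ 0) (hB : B ≠ 0)
    (hD : D ≠ 0) (h : A + B = c * D) : c / (A * B) = (A⁻¹ + B⁻¹) / D := by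
  rw [inv_add_inv hA hB, h]
  field_simp

theorem cancellation_remaining_terms {a b c A B I J D : F} (hA : A ≠ 0) (hB : B ≠ 0)
    (hI : I ≠ 0) (hJ : J ≠ 0) (hD : D ≠ 0) (hAB : A + B = c * D)
    (hIJ : b * D + a * J = b * I + B) :
    b / (I * J * B) + a * c / (B * A * I) = (a / (A * I) + b / (B * J) + 1 / (I * J)) / D := by
  field_simp
  linear_combination (-(a * J)) * hAB + A * hIJ

theorem cancellation_identity {a b c r t A B I J K D : F} (hA : A ≠ 0) (hB : B ≠ 0)
    (hI : I ≠ 0) (hJ : J ≠ 0) (hD : D ≠ 0) (hAB : A + B = c * D)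
    (hIJ : b * D + a * J = b * I + B) :
    t * (c * r / (A * B)) + b / (I * J * B) + a * c / (B * A * I) + c ^ 2 / (K * B * A)
      = (t * (r / A) + c / (A * K) + a / (A * I) + t * (r / B) + c / (B * K) + b / (B * J)
          + 1 / (I * J)) / D := by
  have hpair := div_mul_eq_inv_add_inv_div_of_add_eq hA hB hD hAB
  have hrest := cancellation_remaining_terms hA hB hI hJ hD hAB hIJ
  linear_combination (t * r + c / K) * hpair + hrest

end

theorem stmt1_general (a b i j k r s : ℝ) (c m n d : ℝ)
    (hc : c = a + b)
    (hm : m = c * i + a * k + a * c * r)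
    (hn : n = c * j + b * k + b * c * r)
    (hd : d = i + j + k + c * r)
    (h2 : m * s + a + c ≠ 0) (h3 : n * s + b + c ≠ 0)
    (h4 : i * s + 1 ≠ 0) (h5 : j * s + 1 ≠ 0)
    (h7 : d * s + 3 ≠ 0) :
    -s / (s + 1) * (c * r / ((m * s + a + c) * (n * s + b + c)))
      + b / ((i * s + 1) * (j * s + 1) * (n * s + b + c))
      + a * c / ((n * s + b + c) * (m * s + a + c) * (i * s + 1))
      + c ^ 2 / ((k * s + 1) * (n * s + b + c) * (m * s + a + c))
    = (-s / (s + 1) * (r / (m * s + a + c))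
        + c / ((m * s + a + c) * (k * s + 1))
        + a / ((m * s + a + c) * (i * s + 1))
        + -s / (s + 1) * (r / (n * s + b + c))
        + c / ((n * s + b + c) * (k * s + 1))
        + b / ((n * s + b + c) * (j * s + 1))
        + 1 / ((i * s + 1) * (j * s + 1))) / (d * s + 3) := by
  subst hc hm hn hd
  exact cancellation_identity h2 h3 h4 h5 h7 (by ring) (by ring)

/-- Real-number form of the cancellation identity: with `c = a+b`,
`m = c·i + a·k + a·c·r`, `n = c·j + b·k + b·c·r`, `d = i + j + k + c·r`,
and all occurring denominators nonzero, the local topological zeta function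
of the curve polynomial equals `(Z1 + Z2 + R)/(d·s+3)`. -/
theorem stmt1 (a b i j k r s : ℝ) (c m n d : ℝ)
    (hc : c = a + b)
    (hm : m = c * i + a * k + a * c * r)
    (hn : n = c * j + b * k + b * c * r)
    (hd : d = i + j + k + c * r)
    (h1 : s + 1 ≠ 0) (h2 : m * s + a + c ≠ 0) (h3 : n * s + b + c ≠ 0)
    (h4 : i * s + 1 ≠ 0) (h5 : j * s + 1 ≠ 0) (h6 : k * s + 1 ≠ 0)
    (h7 : d * s + 3 ≠ 0) :
    -s / (s + 1) * (c * r / ((m * s + a + c) * (n * s + b + c)))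
      + b / ((i * s + 1) * (j * s + 1) * (n * s + b + c))
      + a * c / ((n * s + b + c) * (m * s + a + c) * (i * s + 1))
      + c ^ 2 / ((k * s + 1) * (n * s + b + c) * (m * s + a + c))
    = (-s / (s + 1) * (r / (m * s + a + c))
        + c / ((m * s + a + c) * (k * s + 1))
        + a / ((m * s + a + c) * (i * s + 1))
        + -s / (s + 1) * (r / (n * s + b + c))
        + c / ((n * s + b + c) * (k * s + 1))
        + b / ((n * s + b + c) * (j * s + 1))
        + 1 / ((i * s + 1) * (j * s + 1))) / (d * s + 3) :=
  stmt1_general a b i j k r s c m n d hc hm hn hd h2 h3 h4 h5 h7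
end

section
/- Let a, b, i, j, k, r be integers with a, b, r ≥ 1, gcd(a,b) = 1, and i, j, k ∈ {0,1}; set c := a+b, m := c·i + a·k + a·c·r, n := c·j + b·k + b·c·r. Let Z ∈ ℚ(s) be the rational function Z := −s/(s+1) · (c·r)/((m·s+a+c)·(n·s+b+c)) + b/((i·s+1)·(j·s+1)·(n·s+b+c)) + (a·c)/((n·s+b+c)·(m·s+a+c)·(i·s+1)) + c²/((k·s+1)·(n·s+b+c)·(m·s+a+c)). Then every pole of Z (i.e., every root of the denominator of Z written in lowest terms) belongs to the set {−1, −(a+c)/m, −(b+c)/n}. -/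
/-!
The denominator of a sum or product of rational functions divides the product of the
denominators, and that of `p / q` divides `q`; so every pole of `Z` is a root of one of the
linear factors `s + 1`, `i s + 1`, `j s + 1`, `k s + 1`, `m s + a + c`, `n s + b + c`. Since
`i, j, k ∈ {0, 1}` and `a + c, b + c ≠ 0`, these roots lie in `{−1, −(a+c)/m, −(b+c)/n}`.
-/

open Polynomial

namespace RatFunc

variable {K : Type*} [Field K]

def poles (x : RatFunc K) : Set K := {t | x.denom.IsRoot t}

lemma poles_subset_of_denom_dvd {x : RatFunc K} {q : K[X]} (h : x.denom ∣ q) :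
    x.poles ⊆ {t | q.IsRoot t} :=
  fun _ ht => ht.dvd h

lemma poles_add_subset {x y : RatFunc K} {S : Set K} (hx : x.poles ⊆ S) (hy : y.poles ⊆ S) :
    (x + y).poles ⊆ S := fun _ ht =>
  (root_mul.mp ((poles_subset_of_denom_dvd (denom_add_dvd x y)) ht)).elim (@hx _) (@hy _)

lemma poles_mul_subset {x y : RatFunc K} {S : Set K} (hx : x.poles ⊆ S) (hy : y.poles ⊆ S) :
    (x * y).poles ⊆ S := fun _ ht =>
  (root_mul.mp ((poles_subset_of_denom_dvd (denom_mul_dvd x y)) ht)).elim (@hx _) (@hy _)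

lemma poles_algebraMap_div_subset (p q : K[X]) :
    (algebraMap K[X] (RatFunc K) p / algebraMap K[X] (RatFunc K) q).poles ⊆ {t | q.IsRoot t} :=
  poles_subset_of_denom_dvd (denom_div_dvd p q)

end RatFunc

namespace Polynomial

variable {K : Type*} [Field K]

lemma setOf_isRoot_mul (p q : K[X]) :
    {t | (p * q).IsRoot t} = {t | p.IsRoot t} ∪ {t | q.IsRoot t} :=
  Set.ext fun _ => root_mul

lemma setOf_isRoot_C_mul_X_add_C_subset (m : K) {e : K} (he : e ≠ 0) :
    {t | (C m * X + C e).IsRoot t} ⊆ {-(e / m)} := by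
  intro t ht
  replace ht : m * t + e = 0 := by simpa using ht
  have hm : m ≠ 0 := by rintro rfl; simp_all
  rw [Set.mem_singleton_iff]
  field_simp
  linear_combination ht

lemma setOf_isRoot_C_mul_X_add_one_subset {i : K} (hi : i = 0 ∨ i = 1) :
    {t | (C i * X + 1).IsRoot t} ⊆ {-1} := by
  intro t ht
  replace ht : i * t + 1 = 0 := by simpa using ht
  rcases hi with rfl | rfl
  · simp at ht
  · rw [Set.mem_singleton_iff]
    linear_combination ht

end Polynomial

theorem stmt3_general (a b i j k r : ℤ)
    (ha : 1 ≤ a) (hb : 1 ≤ b)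
    (hi : i = 0 ∨ i = 1) (hj : j = 0 ∨ j = 1) (hk : k = 0 ∨ k = 1)
    (c m n : ℤ)
    (hc : c = a + b)
    (Z : RatFunc ℚ)
    (hZ : Z = -RatFunc.X / (RatFunc.X + 1)
          * (RatFunc.C ((c : ℚ) * r)
              / ((RatFunc.C (m : ℚ) * RatFunc.X + RatFunc.C ((a : ℚ) + c))
                  * (RatFunc.C (n : ℚ) * RatFunc.X + RatFunc.C ((b : ℚ) + c))))
        + RatFunc.C (b : ℚ)
            / ((RatFunc.C (i : ℚ) * RatFunc.X + 1) * (RatFunc.C (j : ℚ) * RatFunc.X + 1)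
                * (RatFunc.C (n : ℚ) * RatFunc.X + RatFunc.C ((b : ℚ) + c)))
        + RatFunc.C ((a : ℚ) * c)
            / ((RatFunc.C (n : ℚ) * RatFunc.X + RatFunc.C ((b : ℚ) + c))
                * (RatFunc.C (m : ℚ) * RatFunc.X + RatFunc.C ((a : ℚ) + c))
                * (RatFunc.C (i : ℚ) * RatFunc.X + 1))
        + RatFunc.C ((c : ℚ) ^ 2)
            / ((RatFunc.C (k : ℚ) * RatFunc.X + 1)
                * (RatFunc.C (n : ℚ) * RatFunc.X + RatFunc.C ((b : ℚ) + c))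
                * (RatFunc.C (m : ℚ) * RatFunc.X + RatFunc.C ((a : ℚ) + c)))) :
    ∀ x : ℚ, Polynomial.eval x Z.denom = 0 →
      x = -1 ∨ x = -(((a : ℚ) + c) / m) ∨ x = -(((b : ℚ) + c) / n) := by
  have hac : (a : ℚ) + c ≠ 0 := by rw [hc]; push_cast; exact_mod_cast (by omega : a + (a + b) ≠ 0)
  have hbc : (b : ℚ) + c ≠ 0 := by rw [hc]; push_cast; exact_mod_cast (by omega : b + (a + b) ≠ 0)
  set S : Set ℚ := {-1, -(((a : ℚ) + c) / m), -(((b : ℚ) + c) / n)}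
  have hunit {e : ℤ} (he : e = 0 ∨ e = 1) : {t : ℚ | (C (e : ℚ) * X + 1).IsRoot t} ⊆ S :=
    (setOf_isRoot_C_mul_X_add_one_subset (K := ℚ) (by exact_mod_cast he)).trans (by simp [S])
  have hX : {t : ℚ | (X + 1 : ℚ[X]).IsRoot t} ⊆ S := by simpa using hunit (e := 1) (by simp)
  have hM : {t : ℚ | (C (m : ℚ) * X + C ((a : ℚ) + c)).IsRoot t} ⊆ S :=
    (setOf_isRoot_C_mul_X_add_C_subset _ hac).trans (by simp [S])
  have hN : {t : ℚ | (C (n : ℚ) * X + C ((b : ℚ) + c)).IsRoot t} ⊆ S :=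
    (setOf_isRoot_C_mul_X_add_C_subset _ hbc).trans (by simp [S])
  -- Pull `C`, `X` and `1` back to `ℚ[X]`, so that each summand is a quotient `p / q` of polynomials.
  have hone : (1 : RatFunc ℚ) = algebraMap ℚ[X] (RatFunc ℚ) 1 := (map_one _).symm
  simp only [hone, ← RatFunc.algebraMap_C, ← RatFunc.algebraMap_X, ← map_neg, ← map_add,
    ← map_mul] at hZ
  have hZS : Z.poles ⊆ S := by
    rw [hZ]
    refine RatFunc.poles_add_subset (RatFunc.poles_add_subset (RatFunc.poles_add_subset
      (RatFunc.poles_mul_subset ?_ ?_) ?_) ?_) ?_ <;>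
    refine (RatFunc.poles_algebraMap_div_subset _ _).trans ?_ <;>
    simp only [setOf_isRoot_mul, Set.union_subset_iff, hX, hM, hN, hunit hi, hunit hj, hunit hk,
      and_self]
  exact fun x hx => hZS hx

/-- Every pole of the local topological zeta function `Z ∈ ℚ(s)` of an extremely
degenerated reduced homogeneous polynomial, i.e. every root of the denominator
of `Z` written in lowest terms, lies in `{−1, −(a+c)/m, −(b+c)/n}`. -/
theorem stmt3 (a b i j k r : ℤ)
    (ha : 1 ≤ a) (hb : 1 ≤ b) (hr : 1 ≤ r)
    (hab : IsCoprime a b)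
    (hi : i = 0 ∨ i = 1) (hj : j = 0 ∨ j = 1) (hk : k = 0 ∨ k = 1)
    (c m n : ℤ)
    (hc : c = a + b)
    (hm : m = c * i + a * k + a * c * r)
    (hn : n = c * j + b * k + b * c * r)
    (Z : RatFunc ℚ)
    (hZ : Z = -RatFunc.X / (RatFunc.X + 1)
          * (RatFunc.C ((c : ℚ) * r)
              / ((RatFunc.C (m : ℚ) * RatFunc.X + RatFunc.C ((a : ℚ) + c))
                  * (RatFunc.C (n : ℚ) * RatFunc.X + RatFunc.C ((b : ℚ) + c))))
        + RatFunc.C (b : ℚ)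
            / ((RatFunc.C (i : ℚ) * RatFunc.X + 1) * (RatFunc.C (j : ℚ) * RatFunc.X + 1)
                * (RatFunc.C (n : ℚ) * RatFunc.X + RatFunc.C ((b : ℚ) + c)))
        + RatFunc.C ((a : ℚ) * c)
            / ((RatFunc.C (n : ℚ) * RatFunc.X + RatFunc.C ((b : ℚ) + c))
                * (RatFunc.C (m : ℚ) * RatFunc.X + RatFunc.C ((a : ℚ) + c))
                * (RatFunc.C (i : ℚ) * RatFunc.X + 1))
        + RatFunc.C ((c : ℚ) ^ 2)
            / ((RatFunc.C (k : ℚ) * RatFunc.X + 1)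
                * (RatFunc.C (n : ℚ) * RatFunc.X + RatFunc.C ((b : ℚ) + c))
                * (RatFunc.C (m : ℚ) * RatFunc.X + RatFunc.C ((a : ℚ) + c)))) :
    ∀ x : ℚ, Polynomial.eval x Z.denom = 0 →
      x = -1 ∨ x = -(((a : ℚ) + c) / m) ∨ x = -(((b : ℚ) + c) / n) :=
  stmt3_general a b i j k r ha hb hi hj hk c m n hc Z hZ
end

section
/- Let a, b be coprime positive integers, c := a+b, and λ a nonzero complex number. Then the polynomial x^a·y^b − λ·z^c is irreducible in the polynomial ring ℂ[x,y,z]. -/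
/-!
For a domain `R` and `A = R[z][y]`, as a polynomial in `x` over `A`, `x^a y^b - λ z^c` is
`C u * X^a - C v` with `u = y^b` and `v = λ z^c` coprime in `A`, hence primitive, and by
Gauss's lemma it is irreducible once `X^a - v/u` is irreducible over `Frac A`. For odd `a`
(no loss after swapping `x` and `y`, since `a` and `b` are coprime) Capelli's criterion reduces
this to `v/u` not being a `p`-th power for a prime `p ∣ a`; comparing `y`-degrees in
`f^p y^b = v g^p` shows that a `p`-th root forces `p ∣ b`, contradicting `gcd(a, b) = 1`.
-/

open MvPolynomial

namespace Polynomial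

theorem isPrimitive_C_mul_X_pow_sub_C {R : Type*} [CommRing R] {u v : R} {n : ℕ} (hn : n ≠ 0)
    (huv : IsRelPrime u v) : (C u * X ^ n - C v).IsPrimitive := by
  refine isPrimitive_iff_isUnit_of_C_dvd.mpr fun r hr ↦ huv ?_ ?_
  · simpa [coeff_X_pow, coeff_C, hn] using (C_dvd_iff_dvd_coeff r _).mp hr n
  · simpa [coeff_X_pow, hn.symm] using (C_dvd_iff_dvd_coeff r _).mp hr 0

theorem irreducible_C_mul_X_pow_sub_C_of_odd {R K : Type*} [CommRing R] [Field K] [Algebra R K]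
    [IsFractionRing R K] {u v : R} {n : ℕ} (hn : Odd n) (hu : u ≠ 0)
    (huv : IsRelPrime u v)
    (hv : ∀ p : ℕ, p.Prime → p ∣ n → ∀ t : K, t ^ p ≠ algebraMap R K v / algebraMap R K u) :
    Irreducible (C u * X ^ n - C v) := by
  have hinj := IsFractionRing.injective R K
  have hu' : algebraMap R K u ≠ 0 := (map_ne_zero_iff _ hinj).mpr hu
  have hassoc : Associated (X ^ n - C (algebraMap R K v / algebraMap R K u))
      ((C u * X ^ n - C v).map (algebraMap R K)) := by
    refine ⟨(isUnit_C.mpr hu'.isUnit).unit, ?_⟩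
    simp only [IsUnit.unit_spec, Polynomial.map_sub, Polynomial.map_mul, map_C, map_X,
      Polynomial.map_pow]
    rw [sub_mul, ← C_mul, div_mul_cancel₀ _ hu', mul_comm]
  exact (isPrimitive_C_mul_X_pow_sub_C hn.pos.ne' huv).irreducible_of_irreducible_map_of_injective
    hinj (hassoc.irreducible (X_pow_sub_C_irreducible_of_odd hn hv))

variable {R : Type*} [CommRing R] [IsDomain R]

theorem isRelPrime_X_pow_C {r : R} (hr : r ≠ 0) (b : ℕ) : IsRelPrime (X ^ b : R[X]) (C r) := by
  intro d hdX hdC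
  have hd : d = C (d.coeff 0) :=
    eq_C_of_natDegree_eq_zero (by simpa using natDegree_le_of_dvd hdC (C_ne_zero.mpr hr))
  rw [hd] at hdX ⊢
  exact (isUnit_of_dvd_one (by simpa using (C_dvd_iff_dvd_coeff _ _).mp hdX b)).map C

theorem dvd_of_pow_mul_X_pow_eq_C_mul_pow {f g : R[X]} {r : R} {p b : ℕ} (hr : r ≠ 0)
    (hg : g ≠ 0) (h : f ^ p * X ^ b = C r * g ^ p) : p ∣ b := by
  have hf : f ^ p ≠ 0 := by
    intro hf
    rw [hf, zero_mul, eq_comm] at h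
    exact mul_ne_zero (C_ne_zero.mpr hr) (pow_ne_zero p hg) h
  have hdeg := congrArg natDegree h
  rw [natDegree_mul hf (pow_ne_zero _ X_ne_zero), natDegree_C_mul hr,
    natDegree_pow, natDegree_pow, natDegree_pow, natDegree_X, mul_one] at hdeg
  exact (Nat.dvd_add_right (dvd_mul_right p _)).mp (hdeg ▸ dvd_mul_right p _)

theorem dvd_of_pow_eq_C_div_X_pow {L : Type*} [Field L] [Algebra R[X] L] [IsFractionRing R[X] L]
    {r : R} (hr : r ≠ 0) {p b : ℕ} (t : L)
    (ht : t ^ p = algebraMap R[X] L (C r) / algebraMap R[X] L (X ^ b)) : p ∣ b := by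
  obtain ⟨f, g, hg, rfl⟩ := IsFractionRing.div_surjective (A := R[X]) t
  have hinj := IsFractionRing.injective R[X] L
  have hg' : algebraMap R[X] L g ≠ 0 := (map_ne_zero_iff _ hinj).mpr (nonZeroDivisors.ne_zero hg)
  have hXb : algebraMap R[X] L (X ^ b) ≠ 0 := (map_ne_zero_iff _ hinj).mpr (pow_ne_zero _ X_ne_zero)
  refine dvd_of_pow_mul_X_pow_eq_C_mul_pow (f := f) hr (nonZeroDivisors.ne_zero hg) (hinj ?_)
  rw [div_pow, div_eq_div_iff (pow_ne_zero _ hg') hXb] at ht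
  simpa only [map_mul, map_pow] using ht

theorem irreducible_C_X_pow_mul_X_pow_sub_C_C {r : R} (hr : r ≠ 0) {a b : ℕ} (ha : Odd a)
    (hab : a.Coprime b) : Irreducible (C (X ^ b : R[X]) * X ^ a - C (C r)) :=
  irreducible_C_mul_X_pow_sub_C_of_odd (K := FractionRing R[X]) ha (pow_ne_zero _ X_ne_zero)
    (isRelPrime_X_pow_C hr b) fun _ hp hpa t ht ↦
      hp.ne_one (Nat.eq_one_of_dvd_coprimes hab hpa (dvd_of_pow_eq_C_div_X_pow hr t ht))

end Polynomial

theorem MvPolynomial.irreducible_X_pow_mul_X_pow_sub_C_mul_X_pow {R : Type*} [CommRing R]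
    [IsDomain R] {a b : ℕ} (ha : Odd a) (hab : a.Coprime b) (c : ℕ) {lam : R} (hlam : lam ≠ 0) :
    Irreducible ((X 0 : MvPolynomial (Fin 3) R) ^ a * X 1 ^ b - C lam * X 2 ^ c) := by
  let e : MvPolynomial (Fin 3) R ≃ₐ[R] Polynomial (Polynomial (MvPolynomial (Fin 1) R)) :=
    (finSuccEquiv R 2).trans (Polynomial.mapAlgEquiv (finSuccEquiv R 1))
  have hx : e (X 0) = Polynomial.X := by
    simp only [e, AlgEquiv.trans_apply, finSuccEquiv_X_zero, Polynomial.coe_mapAlgEquiv,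
      Polynomial.map_X]
  have hy : e (X 1) = Polynomial.C Polynomial.X := by
    rw [show (1 : Fin 3) = Fin.succ 0 from rfl]
    simp only [e, AlgEquiv.trans_apply, finSuccEquiv_X_succ, finSuccEquiv_X_zero,
      Polynomial.coe_mapAlgEquiv, Polynomial.map_C, RingHom.coe_coe]
  have hz : e (X 2) = Polynomial.C (Polynomial.C (X 0)) := by
    rw [show (2 : Fin 3) = Fin.succ 1 from rfl]
    simp only [e, AlgEquiv.trans_apply, finSuccEquiv_X_succ, Polynomial.coe_mapAlgEquiv,
      Polynomial.map_C]
    rw [show (1 : Fin 2) = Fin.succ 0 from rfl]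
    simp only [RingHom.coe_coe, finSuccEquiv_X_succ]
  have he : e ((X 0 : MvPolynomial (Fin 3) R) ^ a * X 1 ^ b - C lam * X 2 ^ c) =
      Polynomial.C (Polynomial.X ^ b) * Polynomial.X ^ a -
        Polynomial.C (Polynomial.C (C lam * X 0 ^ c)) := by
    have hC : e (C lam) = Polynomial.C (Polynomial.C (C lam)) := e.commutes lam
    simp only [map_sub, map_mul, map_pow, hx, hy, hz, hC]
    ring
  rw [← MulEquiv.irreducible_iff e, he]
  exact Polynomial.irreducible_C_X_pow_mul_X_pow_sub_C_C
    (mul_ne_zero (C_ne_zero.mpr hlam) (pow_ne_zero _ (X_ne_zero 0))) ha hab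

theorem stmt4_general (a b c : ℕ) (hab : Nat.Coprime a b) (lam : ℂ) (hlam : lam ≠ 0) :
    Irreducible ((X 0 : MvPolynomial (Fin 3) ℂ) ^ a * X 1 ^ b - C lam * X 2 ^ c) := by
  rcases Nat.even_or_odd a with ha | ha
  · have hb : Odd b := Nat.coprime_two_left.mp (hab.coprime_dvd_left ha.two_dvd)
    have hswap := irreducible_X_pow_mul_X_pow_sub_C_mul_X_pow hb hab.symm c hlam
    rw [← MulEquiv.irreducible_iff (renameEquiv ℂ (Equiv.swap (0 : Fin 3) 1))] at hswap
    convert hswap using 1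
    simp [Equiv.swap_apply_of_ne_of_ne, mul_comm]
  · exact irreducible_X_pow_mul_X_pow_sub_C_mul_X_pow ha hab c hlam

/-- For coprime positive integers `a, b`, `c = a + b`, and `λ ≠ 0`, the polynomial
`x^a·y^b − λ·z^c` is irreducible in `ℂ[x,y,z]`. -/
theorem stmt4 (a b c : ℕ) (ha : 0 < a) (hb : 0 < b) (hab : Nat.Coprime a b)
    (hc : c = a + b) (lam : ℂ) (hlam : lam ≠ 0) :
    Irreducible ((X 0 : MvPolynomial (Fin 3) ℂ) ^ a * X 1 ^ b - C lam * X 2 ^ c) :=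
  stmt4_general a b c hab lam hlam
end

section
/- Let a, b be positive integers, c := a+b, and r ≥ 1 an integer. Let g = Σ_{t=0}^r c_t·T^t ∈ ℂ[T] be a polynomial of degree r with g(0) ≠ 0, and define h := Σ_{t=0}^r c_t·x^{a·t}·y^{b·t}·z^{c·(r−t)} ∈ ℂ[x,y,z]. Then h is squarefree in ℂ[x,y,z] if and only if g is squarefree in ℂ[T]. -/
/-!
Over `ℂ` write `g = c_r ∏ (T - α)` over its roots. The sum defining `h` is the binary form
`Σ c_t U^t V^(r-t)` homogenizing `g`, evaluated at `U = x^a y^b`, `V = z^c`, so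
`h = c_r ∏ (x^a y^b - α z^c)`, and every `α` is nonzero because `g(0) ≠ 0`. Each factor is
squarefree: a repeated prime factor would divide `∂/∂z = -c α z^(c-1)`, hence be `z`, which
does not divide the factor. Two factors with different roots are coprime, since a common prime
factor divides their difference `(β - α) z^c`. So `h` is squarefree exactly when the roots of
`g` are distinct.
-/

open MvPolynomial

theorem Multiset.squarefree_prod_map_iff_nodup {R ι : Type*} [CommMonoidWithZero R]
    [IsCancelMulZero R] [DecompositionMonoid R] {F : ι → R} {s : Multiset ι}
    (hsq : ∀ i ∈ s, Squarefree (F i)) (hunit : ∀ i ∈ s, ¬IsUnit (F i))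
    (hrel : ∀ i ∈ s, ∀ j ∈ s, i ≠ j → IsRelPrime (F i) (F j)) :
    Squarefree (s.map F).prod ↔ s.Nodup := by
  refine ⟨fun hs => Multiset.nodup_iff_ne_cons_cons.mpr ?_, fun hnd => ?_⟩
  · rintro i t rfl
    refine hunit i (Multiset.mem_cons_self _ _) (hs (F i) ?_)
    simp only [Multiset.map_cons, Multiset.prod_cons, ← mul_assoc]
    exact dvd_mul_right _ _
  · exact Finset.squarefree_prod_of_pairwise_isCoprime (s := ⟨s, hnd⟩)
      (fun i hi j hj hij => hrel i hi j hj hij) hsq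

theorem MvPolynomial.dvd_pderiv_of_mul_self_dvd {σ R : Type*} [CommRing R]
    {p f : MvPolynomial σ R} (i : σ) (h : p * p ∣ f) : p ∣ pderiv i f := by
  obtain ⟨m, rfl⟩ := h
  rw [pderiv_mul, pderiv_mul]
  exact dvd_add (dvd_mul_of_dvd_left (dvd_add (dvd_mul_left _ _) (dvd_mul_right _ _)) _)
    (dvd_mul_of_dvd_left (dvd_mul_right _ _) _)

theorem Polynomial.aeval_homogenize {R A : Type*} [CommSemiring R] [CommSemiring A] [Algebra R A]
    (p : Polynomial R) (n : ℕ) (x : Fin 2 → A) :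
    MvPolynomial.aeval x (p.homogenize n) =
      ∑ t ∈ Finset.range (n + 1), algebraMap R A (p.coeff t) * x 0 ^ t * x 1 ^ (n - t) := by
  simp [Polynomial.homogenize, Finset.Nat.sum_antidiagonal_eq_sum_range_succ_mk,
    MvPolynomial.aeval_monomial, Finsupp.prod_fintype, mul_assoc]

theorem Polynomial.homogenize_multiset_prod_X_sub_C {R : Type*} [CommRing R] [Nontrivial R]
    (s : Multiset R) :
    (s.map (X - C ·)).prod.homogenize (Multiset.card s) =
      (s.map fun α => MvPolynomial.X 0 - MvPolynomial.C α * MvPolynomial.X 1).prod := by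
  induction s using Multiset.induction with
  | empty => simp
  | cons α s ih =>
    rw [Multiset.map_cons, Multiset.prod_cons, Multiset.card_cons, add_comm,
      Polynomial.homogenize_mul _ _ (Polynomial.natDegree_X_sub_C_le α)
        (Polynomial.natDegree_multiset_prod_X_sub_C_eq_card s).le, ih]
    simp

theorem Polynomial.Splits.homogenize_eq {K : Type*} [Field K] {g : Polynomial K}
    (hg : g.Splits) : g.homogenize g.natDegree = MvPolynomial.C g.leadingCoeff *
      (g.roots.map fun α => MvPolynomial.X 0 - MvPolynomial.C α * MvPolynomial.X 1).prod := by
  rw [hg.natDegree_eq_card_roots, ← Polynomial.homogenize_multiset_prod_X_sub_C,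
    ← Polynomial.homogenize_C_mul, ← hg.eq_prod_roots]

theorem Polynomial.Splits.squarefree_iff_nodup_roots {K : Type*} [Field K] [PerfectField K]
    {g : Polynomial K} (hg : g.Splits) (hg0 : g ≠ 0) : Squarefree g ↔ g.roots.Nodup :=
  PerfectField.separable_iff_squarefree.symm.trans
    (Polynomial.nodup_roots_iff_of_splits hg0 hg).symm

section RootFactor

variable {K : Type*} [Field K] {a b c : ℕ} {α β : K}

noncomputable def rootFactor (a b c : ℕ) (α : K) : MvPolynomial (Fin 3) K :=
  X 0 ^ a * X 1 ^ b - C α * X 2 ^ c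

theorem X_two_not_dvd_rootFactor (hc : c ≠ 0) : ¬X 2 ∣ rootFactor a b c α := by
  rintro ⟨m, hm⟩
  have h := congrArg (aeval (![X 0, X 1, 0] : Fin 3 → MvPolynomial (Fin 3) K)) hm
  simp [rootFactor, zero_pow hc, X_ne_zero] at h

theorem rootFactor_ne_zero (hc : c ≠ 0) : rootFactor a b c α ≠ 0 := fun h =>
  X_two_not_dvd_rootFactor hc (h ▸ dvd_zero _)

theorem not_isUnit_rootFactor (hc : c ≠ 0) (hα : α ≠ 0) : ¬IsUnit (rootFactor a b c α) := by
  intro hu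
  have h := Polynomial.natDegree_eq_zero_of_isUnit
    (hu.map (aeval (![1, 1, Polynomial.X] : Fin 3 → Polynomial K)))
  simp only [rootFactor, map_sub, map_mul, map_pow, aeval_X, aeval_C, Matrix.cons_val, one_pow,
    one_mul, Polynomial.algebraMap_eq] at h
  rw [Polynomial.natDegree_sub_eq_right_of_natDegree_lt, Polynomial.natDegree_C_mul_X_pow _ _ hα]
    at h
  · exact hc h
  · rw [Polynomial.natDegree_C_mul_X_pow _ _ hα, Polynomial.natDegree_one]
    exact Nat.pos_of_ne_zero hc

theorem pderiv_two_rootFactor :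
    pderiv 2 (rootFactor a b c α) = C (-(α * c)) * X 2 ^ (c - 1) := by
  simp [rootFactor]
  ring

theorem rootFactor_sub_rootFactor :
    rootFactor a b c α - rootFactor a b c β = C (β - α) * X 2 ^ c := by
  simp only [rootFactor, map_sub]
  ring

theorem not_dvd_rootFactor_of_dvd_C_mul_X_two_pow (hc : c ≠ 0) {p : MvPolynomial (Fin 3) K}
    (hp : Prime p) {u : K} (hu : u ≠ 0) {k : ℕ} (h : p ∣ C u * X 2 ^ k) :
    ¬p ∣ rootFactor a b c α := by
  have hpX : p ∣ X 2 := hp.dvd_of_dvd_pow (((Ne.isUnit hu).map C).dvd_mul_left.mp h)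
  exact fun hpf => X_two_not_dvd_rootFactor hc
    ((hp.associated_of_dvd X_prime hpX).symm.dvd.trans hpf)

theorem squarefree_rootFactor (hc : (c : K) ≠ 0) (hα : α ≠ 0) :
    Squarefree (rootFactor a b c α) := by
  have hc0 : c ≠ 0 := by rintro rfl; simp at hc
  rw [squarefree_iff_no_irreducibles (rootFactor_ne_zero hc0)]
  intro p hp hpp
  have hpd := dvd_pderiv_of_mul_self_dvd 2 hpp
  rw [pderiv_two_rootFactor] at hpd
  exact not_dvd_rootFactor_of_dvd_C_mul_X_two_pow hc0
    (UniqueFactorizationMonoid.irreducible_iff_prime.mp hp) (by simp [hα, hc]) hpd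
    ((dvd_mul_right p p).trans hpp)

theorem isRelPrime_rootFactor (hc : c ≠ 0) (hαβ : α ≠ β) :
    IsRelPrime (rootFactor a b c α) (rootFactor a b c β) := by
  refine (UniqueFactorizationMonoid.isRelPrime_iff_no_prime_factors (rootFactor_ne_zero hc)).mpr
    fun d hdα hdβ hd => ?_
  refine not_dvd_rootFactor_of_dvd_C_mul_X_two_pow hc hd (sub_ne_zero.mpr hαβ.symm) (k := c) ?_
    hdα
  rw [← rootFactor_sub_rootFactor]
  exact dvd_sub hdα hdβ

theorem sum_eq_C_leadingCoeff_mul_prod_rootFactor {g : Polynomial K} (hg : g.Splits) :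
    ∑ t ∈ Finset.range (g.natDegree + 1),
        C (g.coeff t) * X 0 ^ (a * t) * X 1 ^ (b * t) * X 2 ^ (c * (g.natDegree - t)) =
      C g.leadingCoeff * (g.roots.map (rootFactor a b c)).prod := by
  have h := congrArg (aeval (![X 0 ^ a * X 1 ^ b, X 2 ^ c] : Fin 2 → MvPolynomial (Fin 3) K))
    hg.homogenize_eq
  simp only [Polynomial.aeval_homogenize, map_mul, aeval_C, map_multiset_prod, Multiset.map_map,
    Matrix.cons_val_zero, Matrix.cons_val_one, algebraMap_eq] at h
  refine (Finset.sum_congr rfl fun t _ => ?_).trans (h.trans ?_)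
  · rw [mul_pow, ← pow_mul, ← pow_mul, ← pow_mul, mul_comm a, mul_comm b, mul_assoc (C _)]
  · congr 2
    refine Multiset.map_congr rfl fun α _ => ?_
    simp [rootFactor]

end RootFactor

theorem stmt7_general (a b c r : ℕ) (ha : 0 < a) (hc : c = a + b)
    (g : Polynomial ℂ) (hg : g.degree = r) (hg0 : g.eval 0 ≠ 0)
    (h : MvPolynomial (Fin 3) ℂ)
    (hh : h = ∑ t ∈ Finset.range (r + 1),
        C (g.coeff t) * X 0 ^ (a * t) * X 1 ^ (b * t) * X 2 ^ (c * (r - t))) :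
    Squarefree h ↔ Squarefree g := by
  have hc0 : c ≠ 0 := by omega
  have hg_ne : g ≠ 0 := by rintro rfl; simp at hg
  have hroots : ∀ α ∈ g.roots, α ≠ 0 := by
    rintro _ hα rfl
    exact hg0 ((Polynomial.mem_roots hg_ne).mp hα)
  rw [← Polynomial.natDegree_eq_of_degree_eq_some hg,
    sum_eq_C_leadingCoeff_mul_prod_rootFactor (IsAlgClosed.splits g)] at hh
  have hlc : IsUnit (C g.leadingCoeff : MvPolynomial (Fin 3) ℂ) :=
    (Polynomial.leadingCoeff_ne_zero.mpr hg_ne).isUnit.map C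
  rw [hh, (associated_unit_mul_left _ _ hlc).squarefree_iff,
    (IsAlgClosed.splits g).squarefree_iff_nodup_roots hg_ne]
  exact Multiset.squarefree_prod_map_iff_nodup
    (fun α hα => squarefree_rootFactor (by exact_mod_cast hc0) (hroots α hα))
    (fun α hα => not_isUnit_rootFactor hc0 (hroots α hα))
    (fun α _ β _ hαβ => isRelPrime_rootFactor hc0 hαβ)

/-- If `a, b` are positive integers, `c = a + b`, `g` is a polynomial of degree `r ≥ 1`
with `g(0) ≠ 0`, and `h = Σ c_t x^{at} y^{bt} z^{c(r−t)}`, then `h` is squarefree in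
`ℂ[x,y,z]` if and only if `g` is squarefree in `ℂ[T]`. -/
theorem stmt7 (a b c r : ℕ) (ha : 0 < a) (hb : 0 < b) (hc : c = a + b) (hr : 1 ≤ r)
    (g : Polynomial ℂ) (hg : g.degree = r) (hg0 : g.eval 0 ≠ 0)
    (h : MvPolynomial (Fin 3) ℂ)
    (hh : h = ∑ t ∈ Finset.range (r + 1),
        C (g.coeff t) * X 0 ^ (a * t) * X 1 ^ (b * t) * X 2 ^ (c * (r - t))) :
    Squarefree h ↔ Squarefree g :=
  stmt7_general a b c r ha hc g hg hg0 h hh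
end

section
/- Let a, b be positive integers, c := a+b, and r ≥ 1 an integer. Let g = Σ_{t=0}^r c_t·T^t ∈ ℂ[T] be a squarefree polynomial of degree r with g(0) ≠ 0, and define h := Σ_{t=0}^r c_t·x^{a·t}·y^{b·t}·z^{c·(r−t)} ∈ ℂ[x,y,z]. Then every common zero (x₀, y₀, z₀) ∈ ℂ³ of the three polynomials x·∂h/∂x, y·∂h/∂y, z·∂h/∂z satisfies x₀·y₀·z₀ = 0. -/
open MvPolynomial

private lemma evterm (p : Fin 3 → ℂ) (i : Fin 3) (co : ℂ) (m n k : ℕ) :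
    eval p (X i * pderiv i (C co * X 0 ^ m * X 1 ^ n * X 2 ^ k)) =
      ([m, n, k].get ⟨i, by simp⟩ : ℂ) * (co * p 0 ^ m * p 1 ^ n * p 2 ^ k) := by
  fin_cases i <;>
  · simp [pderiv_mul, pderiv_pow, pderiv_X_self, pderiv_X_of_ne, pderiv_C]
    first
    | (cases m with
       | zero => simp
       | succ m => rw [pow_succ (p 0)]; push_cast; ring_nf)
    | (cases n with
       | zero => simp
       | succ n => rw [pow_succ (p 1)]; push_cast; ring_nf)
    | (cases k with
       | zero => simp
       | succ k => rw [pow_succ (p 2)]; push_cast; ring_nf)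

/-- Newton nondegeneracy of the face polynomial `h = Σ c_t x^{at} y^{bt} z^{c(r−t)}`:
if `g` is squarefree of degree `r ≥ 1` with `g(0) ≠ 0`, then every common zero
`(x₀,y₀,z₀) ∈ ℂ³` of `x·∂h/∂x`, `y·∂h/∂y`, `z·∂h/∂z` satisfies `x₀·y₀·z₀ = 0`. -/
theorem stmt8 (a b c r : ℕ) (ha : 0 < a) (hb : 0 < b) (hc : c = a + b) (hr : 1 ≤ r)
    (g : Polynomial ℂ) (hg : g.degree = r) (hgsf : Squarefree g) (hg0 : g.eval 0 ≠ 0)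
    (h : MvPolynomial (Fin 3) ℂ)
    (hh : h = ∑ t ∈ Finset.range (r + 1),
        C (g.coeff t) * X 0 ^ (a * t) * X 1 ^ (b * t) * X 2 ^ (c * (r - t)))
    (p : Fin 3 → ℂ)
    (h0 : eval p (X 0 * pderiv 0 h) = 0)
    (h1 : eval p (X 1 * pderiv 1 h) = 0)
    (h2 : eval p (X 2 * pderiv 2 h) = 0) :
    p 0 * p 1 * p 2 = 0 := by
  by_contra H
  have hp0 : p 0 ≠ 0 := fun e => H (by simp [e])
  have hp1 : p 1 ≠ 0 := fun e => H (by simp [e])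
  have hp2 : p 2 ≠ 0 := fun e => H (by simp [e])
  set S : ℕ → ℂ := fun t => g.coeff t * p 0 ^ (a*t) * p 1 ^ (b*t) * p 2 ^ (c*(r-t)) with hS
  have key : ∀ i : Fin 3, eval p (X i * pderiv i h) =
      ∑ t ∈ Finset.range (r+1),
        (([a*t, b*t, c*(r-t)].get ⟨i, by simp⟩ : ℕ) : ℂ) * S t := by
    intro i
    rw [hh, map_sum, Finset.mul_sum, map_sum]
    exact Finset.sum_congr rfl fun t _ => by
      rw [evterm p i (g.coeff t) (a*t) (b*t) (c*(r-t)), hS]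
  rw [key 0] at h0; rw [key 2] at h2
  simp only [List.get] at h0 h2
  have e0 : ∑ t ∈ Finset.range (r+1), (t : ℂ) * S t = 0 := by
    have : (a : ℂ) * ∑ t ∈ Finset.range (r+1), (t : ℂ) * S t = 0 := by
      rw [Finset.mul_sum, ← h0]
      exact Finset.sum_congr rfl fun t _ => by push_cast; ring
    exact (mul_eq_zero.mp this).resolve_left (Nat.cast_ne_zero.mpr ha.ne')
  have hcpos : 0 < c := by omega
  have e2 : ∑ t ∈ Finset.range (r+1), ((r - t : ℕ) : ℂ) * S t = 0 := by
    have : (c : ℂ) * ∑ t ∈ Finset.range (r+1), ((r - t : ℕ) : ℂ) * S t = 0 := by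
      rw [Finset.mul_sum, ← h2]
      exact Finset.sum_congr rfl fun t _ => by push_cast; ring
    exact (mul_eq_zero.mp this).resolve_left (Nat.cast_ne_zero.mpr hcpos.ne')
  have eS : ∑ t ∈ Finset.range (r+1), S t = 0 := by
    have expand : (r : ℂ) * ∑ t ∈ Finset.range (r+1), S t =
        (∑ t ∈ Finset.range (r+1), (t : ℂ) * S t) +
          ∑ t ∈ Finset.range (r+1), ((r - t : ℕ) : ℂ) * S t := by
      rw [Finset.mul_sum, ← Finset.sum_add_distrib]
      refine Finset.sum_congr rfl fun t ht => ?_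
      have htr : t ≤ r := Nat.lt_succ_iff.mp (Finset.mem_range.mp ht)
      have hcast : ((r - t : ℕ) : ℂ) = (r : ℂ) - t := by push_cast [htr]; ring
      rw [hcast]; ring
    have : (r : ℂ) * ∑ t ∈ Finset.range (r+1), S t = 0 := by rw [expand, e0, e2, add_zero]
    exact (mul_eq_zero.mp this).resolve_left (Nat.cast_ne_zero.mpr (by omega))
  set u : ℂ := p 0 ^ a * p 1 ^ b / p 2 ^ c with hu
  have hune : u ≠ 0 :=
    div_ne_zero (mul_ne_zero (pow_ne_zero _ hp0) (pow_ne_zero _ hp1)) (pow_ne_zero _ hp2)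
  have hz : (p 2 : ℂ) ^ (c*r) ≠ 0 := pow_ne_zero _ hp2
  have hkey : ∀ t, t ≤ r → p 0 ^ (a*t) * p 1 ^ (b*t) * p 2 ^ (c*(r-t)) = u^t * p 2 ^ (c*r) := by
    intro t htr
    have hnn : c*(r-t) + c*t = c*r := by rw [← Nat.mul_add, Nat.sub_add_cancel htr]
    rw [hu, div_pow, div_mul_eq_mul_div, eq_comm,
      div_eq_iff (pow_ne_zero _ (pow_ne_zero _ hp2))]
    rw [mul_pow, ← pow_mul, ← pow_mul, ← pow_mul, ← hnn, pow_add]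
    ring
  have hdeg : g.natDegree = r := Polynomial.natDegree_eq_of_degree_eq_some hg
  have hgu : g.eval u = 0 := by
    have : g.eval u * p 2 ^ (c*r) = 0 := by
      rw [← eS, Polynomial.eval_eq_sum_range, hdeg, Finset.sum_mul]
      refine Finset.sum_congr rfl fun t ht => ?_
      have hk := hkey t (Nat.lt_succ_iff.mp (Finset.mem_range.mp ht))
      have hSt : S t = g.coeff t * (u^t * p 2 ^ (c*r)) := by
        simp only [hS]; rw [← hk]; ring
      rw [hSt]; ring
    exact (mul_eq_zero.mp this).resolve_right hz
  have hgu' : g.derivative.eval u = 0 := by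
    have hd : g.derivative.natDegree < r :=
      hdeg ▸ Polynomial.natDegree_derivative_lt (by omega)
    have ident : ∑ t ∈ Finset.range (r+1), (t : ℂ) * S t =
        u * g.derivative.eval u * p 2 ^ (c*r) := by
      rw [Polynomial.eval_eq_sum_range' hd, Finset.sum_range_succ' (fun t => (t : ℂ) * S t) r]
      rw [Finset.mul_sum, Finset.sum_mul]
      simp only [Nat.cast_zero, zero_mul, add_zero, Polynomial.coeff_derivative]
      refine Finset.sum_congr rfl fun n hn => ?_
      have hk := hkey (n+1) (by have := Finset.mem_range.mp hn; omega)
      have hSn : S (n+1) = g.coeff (n+1) * (u^(n+1) * p 2 ^ (c*r)) := by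
        simp only [hS]; rw [← hk]; ring
      rw [hSn]; push_cast; ring
    have : u * g.derivative.eval u * p 2 ^ (c*r) = 0 := by rw [← ident, e0]
    rcases mul_eq_zero.mp this with h' | h'
    · exact (mul_eq_zero.mp h').resolve_left hune
    · exact absurd h' hz
  have hsep : g.Separable := PerfectField.separable_iff_squarefree.mpr hgsf
  obtain ⟨A, B, hAB⟩ := hsep
  have := congrArg (Polynomial.eval u) hAB
  simp [hgu, hgu'] at this
end
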